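/- arXiv:1105.1799 — 3 statements merged into one kernel-verified Lean document; each statement's English description precedes it below -/
import Mathlib

section
/- Let Λ be a frame, let c ∈ Λ be a compact element, and let a ∈ Λ satisfy ¬ c ≤ a. Then the set S = {x ∈ Λ | a ≤ x and ¬ c ≤ x} has a maximal element, and every maximal element of S is a prime element of Λ. In particular, there exists a prime element p with a ≤ p and ¬ c ≤ p. -/
/-- An element `p` of a lattice with top is prime if `p ≠ ⊤` and
`x ⊓ y ≤ p` implies `x ≤ p` or `y ≤ p`. -/
def IsPrimeElem {Λ : Type*} [Lattice Λ] [OrderTop Λ] (p : Λ) : Prop :=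
  p ≠ ⊤ ∧ ∀ x y : Λ, x ⊓ y ≤ p → x ≤ p ∨ y ≤ p

/-- The December 2024 Mathlib definition of a compact element of a complete lattice. -/
def CompleteLattice.IsCompactElement {α : Type*} [CompleteLattice α] (k : α) :=
  ∀ s : Set α, k ≤ sSup s → ∃ t : Finset α, ↑t ⊆ s ∧ k ≤ t.sup id

/-!
Compactness of `c` makes the supremum of a chain avoiding `c` avoid `c` as well, so Zorn's lemma
gives a maximal `m ≥ a` with `¬ c ≤ m`. If `x ⊓ y ≤ m` with `x, y ≰ m`, maximality forces
`c ≤ m ⊔ x` and `c ≤ m ⊔ y`, and distributivity gives `c ≤ m ⊔ (x ⊓ y) = m`, a contradiction.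
-/

namespace CompleteLattice.IsCompactElement

variable {α : Type*} [CompleteLattice α] {c : α}

theorem exists_le_of_directedOn_of_le_sSup (hc : CompleteLattice.IsCompactElement c)
    {s : Set α} (hne : s.Nonempty) (hdir : DirectedOn (· ≤ ·) s) (hcs : c ≤ sSup s) :
    ∃ x ∈ s, c ≤ x :=
  (isCompactElement_iff_le_of_directed_sSup_le α c).mp
    ((isCompactElement_iff_exists_le_sSup_of_le_sSup α c).mpr hc) s hne hdir hcs

theorem exists_maximal_not_le (hc : CompleteLattice.IsCompactElement c) {a : α}
    (hca : ¬ c ≤ a) : ∃ m, Maximal (fun x => a ≤ x ∧ ¬ c ≤ x) m := by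
  have hchain : ∀ C ⊆ {x | a ≤ x ∧ ¬ c ≤ x}, IsChain (· ≤ ·) C → ∀ y ∈ C,
      ∃ ub ∈ {x | a ≤ x ∧ ¬ c ≤ x}, ∀ z ∈ C, z ≤ ub := by
    intro C hCS hC y hy
    refine ⟨sSup C, ⟨(hCS hy).1.trans (le_sSup hy), fun hcC => ?_⟩, fun z hz => le_sSup hz⟩
    obtain ⟨x, hx, hcx⟩ := hc.exists_le_of_directedOn_of_le_sSup ⟨y, hy⟩ hC.directedOn hcC
    exact (hCS hx).2 hcx
  obtain ⟨m, -, hm⟩ := zorn_le_nonempty₀ _ hchain a ⟨le_rfl, hca⟩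
  exact ⟨m, hm⟩

end CompleteLattice.IsCompactElement

theorem isPrimeElem_of_maximal_not_le {α : Type*} [DistribLattice α] [OrderTop α] {a c m : α}
    (hm : Maximal (fun x => a ≤ x ∧ ¬ c ≤ x) m) : IsPrimeElem m := by
  obtain ⟨ham, hcm⟩ := hm.1
  have hc_le_sup : ∀ z, ¬ z ≤ m → c ≤ m ⊔ z := fun z hz => by
    by_contra hcz
    exact hz (le_sup_right.trans (hm.2 ⟨ham.trans le_sup_left, hcz⟩ le_sup_left))
  refine ⟨fun h => hcm (h ▸ le_top), fun x y hxy => ?_⟩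
  by_contra! ⟨hx, hy⟩
  have hc_le : c ≤ m ⊔ x ⊓ y := sup_inf_left m x y ▸ le_inf (hc_le_sup x hx) (hc_le_sup y hy)
  exact hcm (hc_le.trans (sup_le le_rfl hxy))

theorem stmt2 {Λ : Type*} [Order.Frame Λ] (c a : Λ)
    (hc : CompleteLattice.IsCompactElement c) (hca : ¬ c ≤ a) :
    (∃ m, (a ≤ m ∧ ¬ c ≤ m) ∧ ∀ x, (a ≤ x ∧ ¬ c ≤ x) → m ≤ x → x = m) ∧
    (∀ m, (a ≤ m ∧ ¬ c ≤ m) → (∀ x, (a ≤ x ∧ ¬ c ≤ x) → m ≤ x → x = m) →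
      IsPrimeElem m) ∧
    (∃ p, IsPrimeElem p ∧ a ≤ p ∧ ¬ c ≤ p) := by
  obtain ⟨m, hm⟩ := hc.exists_maximal_not_le hca
  have hprime : ∀ m, (a ≤ m ∧ ¬ c ≤ m) → (∀ x, (a ≤ x ∧ ¬ c ≤ x) → m ≤ x → x = m) →
      IsPrimeElem m :=
    fun m hm hmax => isPrimeElem_of_maximal_not_le ⟨hm, fun x hx hmx => (hmax x hx hmx).le⟩
  exact ⟨⟨m, hm.1, fun x hx hmx => hm.eq_of_ge hx hmx⟩, hprime,
    m, isPrimeElem_of_maximal_not_le hm, hm.1⟩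
end

section
/- Let X be a sober topological space, i.e., X is T0 and every nonempty irreducible closed subset of X has a generic point. Equip the set FrameHom (Opens X) Prop of frame homomorphisms from the open-set lattice of X to Prop with the topology whose open sets are exactly the sets {h | h U} for U an open set of X. Then the map sending x ∈ X to the frame homomorphism (U ↦ x ∈ U) is a homeomorphism from X onto FrameHom (Opens X) Prop. -/
/-!
A point `p : Opens X → Prop` kills a largest open set, the supremum of all opens it kills, and
`p U` holds exactly when `U` meets the complement `Z` of that open. Since `p` preserves `⊤` and
binary meets, `Z` is a nonempty irreducible closed set, so in a quasi-sober space it has a generic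
point `x`, and then `p U ↔ x ∈ U`: evaluation at points is surjective. It is inducing because
every open of `X` is the preimage of the basic open `{p | p U}`, hence injective on a T0 space,
and a bijective inducing map is a homeomorphism.
-/

open TopologicalSpace

/-- The topology on the set of frame homomorphisms `Opens X → Prop` whose open sets are
the sets `{h | h U}` for `U` an open set of `X`. -/
instance pointsTopology (X : Type*) [TopologicalSpace X] :
    TopologicalSpace (FrameHom (Opens X) Prop) :=
  TopologicalSpace.generateFrom
    (Set.range fun U : Opens X => {h : FrameHom (Opens X) Prop | h U})

open Set Topology Locale

theorem apply_iff_not_le_sSup_setOf_not {L F : Type*} [CompleteLattice L] [FunLike F L Prop]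
    [sSupHomClass F L Prop] (p : F) (u : L) : p u ↔ ¬ u ≤ sSup {v | ¬ p v} := by
  refine ⟨fun hu hle => ?_, not_imp_comm.1 fun hu => le_sSup hu⟩
  have : p (sSup {v | ¬ p v}) := OrderHomClass.mono p hle hu
  rw [map_sSup, sSup_Prop_eq] at this
  obtain ⟨_, ⟨v, hv, rfl⟩, hpv⟩ := this
  exact hv hpv

section pointsTopology

variable {X : Type*} [TopologicalSpace X]

theorem pointsTopology_eq : pointsTopology X = PT.instTopologicalSpace (Opens X) := by
  rw [pointsTopology, ← generateFrom_setOfPred_isOpen (PT.instTopologicalSpace (Opens X))]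
  congr 1

theorem isOpen_pointsTopology_iff (s : Set (FrameHom (Opens X) Prop)) :
    IsOpen s ↔ ∃ U : Opens X, s = {h : FrameHom (Opens X) Prop | h U} := by
  rw [pointsTopology_eq, PT.isOpen_iff]
  simp only [eq_comm]

end pointsTopology

namespace Locale

variable {X : Type*} [TopologicalSpace X]

namespace PT

def closedSupport (p : PT (Opens X)) : Set X := (sSup {U | ¬ p U} : Opens X)ᶜ

theorem isClosed_closedSupport (p : PT (Opens X)) : IsClosed p.closedSupport :=
  (sSup {U | ¬ p U} : Opens X).isOpen.isClosed_compl

theorem apply_iff_closedSupport_inter_nonempty (p : PT (Opens X)) (U : Opens X) :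
    p U ↔ (p.closedSupport ∩ U).Nonempty := by
  rw [apply_iff_not_le_sSup_setOf_not p, closedSupport, ← SetLike.coe_subset_coe,
    inter_comm, inter_compl_nonempty_iff]

theorem isIrreducible_closedSupport (p : PT (Opens X)) : IsIrreducible p.closedSupport := by
  refine ⟨?_, fun u v hu hv hpu hpv => ?_⟩
  · simpa using (p.apply_iff_closedSupport_inter_nonempty ⊤).1 (by simp)
  · have hpU := (p.apply_iff_closedSupport_inter_nonempty ⟨u, hu⟩).2 hpu
    have hpV := (p.apply_iff_closedSupport_inter_nonempty ⟨v, hv⟩).2 hpv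
    refine (p.apply_iff_closedSupport_inter_nonempty (⟨u, hu⟩ ⊓ ⟨v, hv⟩)).1 ?_
    rw [map_inf]
    exact ⟨hpU, hpV⟩

end PT

theorem isInducing_localePointOfSpacePoint : IsInducing (localePointOfSpacePoint X) := by
  refine ⟨?_⟩
  rw [pointsTopology, induced_generateFrom_eq, ← range_comp]
  have : range (fun U : Opens X => (U : Set X)) = {s | IsOpen s} :=
    ext fun s => ⟨by rintro ⟨U, rfl⟩; exact U.isOpen, fun hs => ⟨⟨s, hs⟩, rfl⟩⟩
  exact (this ▸ generateFrom_setOfPred_isOpen _).symm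

theorem localePointOfSpacePoint_surjective [QuasiSober X] :
    Function.Surjective (localePointOfSpacePoint X) := fun p => by
  obtain ⟨x, hx⟩ := QuasiSober.sober p.isIrreducible_closedSupport p.isClosed_closedSupport
  refine ⟨x, DFunLike.ext _ _ fun U => propext ?_⟩
  rw [p.apply_iff_closedSupport_inter_nonempty]
  exact hx.mem_open_set_iff U.isOpen

end Locale

theorem stmt10 {X : Type*} [TopologicalSpace X] [T0Space X] [QuasiSober X] :
    (∀ s : Set (FrameHom (Opens X) Prop),
        IsOpen s ↔ ∃ U : Opens X, s = {h : FrameHom (Opens X) Prop | h U}) ∧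
    ∃ e : X ≃ₜ FrameHom (Opens X) Prop, ∀ (x : X) (U : Opens X), e x U ↔ x ∈ U := by
  have hbij : Function.Bijective (localePointOfSpacePoint X) :=
    ⟨isInducing_localePointOfSpacePoint.injective, localePointOfSpacePoint_surjective⟩
  exact ⟨isOpen_pointsTopology_iff,
    (Equiv.ofBijective _ hbij).toHomeomorphOfIsInducing isInducing_localePointOfSpacePoint,
    fun _ _ => Iff.rfl⟩
end

section
/- Let X be a T0 topological space whose open sets satisfy the descending chain condition (there is no infinite strictly decreasing sequence of open sets; equivalently, the order < on Opens X is well-founded). Then for every point x ∈ X there exist open sets U and V of X such that U \ V = {x}. -/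
/-! The descending chain condition gives every point `x` a least open neighbourhood `U`. Every
`y ∈ U` lies in every open set containing `x`, i.e. `y ⤳ x`; for `y ≠ x` the T0 axiom then forbids
`x ⤳ y`, so some open set contains `y` but not `x`. Hence `U \ {x}` is open, and
`U \ (U \ {x}) = {x}`. -/

open TopologicalSpace

section

variable {X : Type*} [TopologicalSpace X]

theorem TopologicalSpace.Opens.exists_isLeast_mem [WellFoundedLT (Opens X)] (x : X) :
    ∃ U : Opens X, IsLeast {V : Opens X | x ∈ V} U := by
  obtain ⟨U, hxU, hmin⟩ := wellFounded_lt.has_min {V : Opens X | x ∈ V} ⟨⊤, trivial⟩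
  refine ⟨U, hxU, fun V hxV => ?_⟩
  have hUV : U ⊓ V = U := (inf_le_left.lt_or_eq).resolve_left (hmin _ ⟨hxU, hxV⟩)
  exact hUV ▸ inf_le_right

theorem specializes_of_mem_of_isLeast {x y : X} {U : Opens X}
    (hU : IsLeast {V : Opens X | x ∈ V} U) (hy : y ∈ U) : y ⤳ x :=
  specializes_iff_forall_open.2 fun s hs hxs =>
    hU.2 (show (⟨s, hs⟩ : Opens X) ∈ {V : Opens X | x ∈ V} from hxs) hy

theorem isOpen_diff_singleton_of_isLeast [T0Space X] {x : X} {U : Opens X}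
    (hU : IsLeast {V : Opens X | x ∈ V} U) : IsOpen ((U : Set X) \ {x}) := by
  refine isOpen_iff_forall_mem_open.2 fun y ⟨hyU, hyx⟩ => ?_
  have hxy : ¬x ⤳ y := fun hxy =>
    hyx (hxy.antisymm (specializes_of_mem_of_isLeast hU hyU)).eq.symm
  obtain ⟨W, hW, hyW, hxW⟩ := not_specializes_iff_exists_open.1 hxy
  exact ⟨W ∩ U, fun z ⟨hzW, hzU⟩ => ⟨hzU, fun hzx => hxW (hzx ▸ hzW)⟩,
    hW.inter U.isOpen, hyW, hyU⟩

end

theorem stmt12 {X : Type*} [TopologicalSpace X] [T0Space X]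
    [WellFoundedLT (TopologicalSpace.Opens X)] (x : X) :
    ∃ U V : TopologicalSpace.Opens X, (U : Set X) \ (V : Set X) = {x} := by
  obtain ⟨U, hU⟩ := Opens.exists_isLeast_mem x
  exact ⟨U, ⟨_, isOpen_diff_singleton_of_isLeast hU⟩,
    Set.sdiff_sdiff_cancel_left (Set.singleton_subset_iff.2 hU.1)⟩
end
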